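/- Let N ≥ 1, 𝕌 a nonempty compact topological space, q_{ij} : 𝕌 → ℝ continuous with q_{ij}(u) ≥ 0 for i ≠ j and Σ_j q_{ij}(u) = 0 for all i, u, r : {1,…,N} × 𝕌 → ℝ continuous, and G(h)_i = min_{u∈𝕌} [ r(i,u) + Σ_j q_{ij}(u) h_j ]. Assume uniform irreducibility: there exist δ > 0 and a matrix Q̄ = [q̄_{ij}] with q̄_{ij} ≥ 0 for i ≠ j, such that q_{ij}(u) ≥ δ·q̄_{ij} for all i ≠ j and u ∈ 𝕌, and for every nonempty proper subset S ⊊ {1,…,N} there exist i ∈ S, j ∉ S with q̄_{ij} > 0. Let (V*, β) ∈ ℝ^N × ℝ satisfy G(V*) = β·𝟏 and V*_N = 0. Then for every g ∈ ℝ^N, the differentiable solution h : [0,∞) → ℝ^N of the relative value iteration ODE ḣ(t) = G(h(t)) − h_N(t)·𝟏 with h(0) = g satisfies h(t) → V* + β·𝟏 as t → ∞. -/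

import Mathlib

/-!
Adding `c(t) = ∫₀ᵗ (h_N - β)` to every coordinate undoes the normalization:
`w = h + c·𝟏 - V*` solves `ẇ = G(V* + w) - G(V*)`. Since `G` is a minimum of affine maps whose
slopes are generators, each `ẇᵢ` lies between `(Q(u)w)ᵢ` and `(Q(u')w)ᵢ` for suitable controls,
so by the maximum principle for generators `max w` is nonincreasing and `min w` nondecreasing.
Uniform irreducibility makes the lower bound spread along the edges of `q̄`: within `N` units of
time every coordinate rises a fixed fraction of the span above the old minimum, so the span
`max w - min w` contracts geometrically to `0`. Hence `ẇ_N → 0`, i.e. `G(h)_N → β`, and the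
scalar equation `ḣ_N = G(h)_N - h_N` forces `h_N → β`; with `hᵢ - h_N - V*ᵢ = wᵢ - w_N → 0`
this gives `h → V* + β·𝟏`.
-/

open Filter Set Topology Real

theorem exp_mul_le_image_of_deriv_ge_sub_mul {φ φ' : ℝ → ℝ} {Λ κ a b : ℝ} (hΛ : 0 ≤ Λ)
    (hκ : 0 ≤ κ) (hab : a ≤ b) (hφ : ∀ x ∈ Icc a b, HasDerivWithinAt φ (φ' x) (Icc a b) x)
    (hbound : ∀ x ∈ Icc a b, κ - Λ * φ x ≤ φ' x) :
    exp (-(Λ * (b - a))) * (φ a + κ * (b - a)) ≤ φ b := by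
  set ψ : ℝ → ℝ := fun x => exp (Λ * x) * φ x - κ * exp (Λ * a) * x
  set ψ' : ℝ → ℝ := fun x => Λ * exp (Λ * x) * φ x + exp (Λ * x) * φ' x - κ * exp (Λ * a)
  have hψ : ∀ x ∈ Icc a b, HasDerivWithinAt ψ (ψ' x) (Icc a b) x := by
    intro x hx
    have hexp : HasDerivAt (fun x => exp (Λ * x)) (exp (Λ * x) * Λ) x :=
      ((hasDerivAt_id x).const_mul Λ).exp.congr_deriv (by simp)
    exact ((hexp.hasDerivWithinAt.mul (hφ x hx)).sub
      ((hasDerivAt_id x).const_mul (κ * exp (Λ * a))).hasDerivWithinAt).congr_deriv (by ring)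
  have hmono : MonotoneOn ψ (Icc a b) := by
    refine monotoneOn_of_hasDerivWithinAt_nonneg (f' := ψ') (convex_Icc a b)
      (fun x hx => (hψ x hx).continuousWithinAt) (fun x hx => ?_) (fun x hx => ?_)
    · rw [interior_Icc] at hx ⊢
      exact (hψ x (Ioo_subset_Icc_self hx)).mono Ioo_subset_Icc_self
    · rw [interior_Icc] at hx
      have hea : exp (Λ * a) ≤ exp (Λ * x) := exp_le_exp.2 (by nlinarith [hx.1])
      have := mul_le_mul_of_nonneg_left (hbound x (Ioo_subset_Icc_self hx)) (exp_pos (Λ * x)).le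
      simp only [ψ']
      nlinarith
  have key := hmono (left_mem_Icc.2 hab) (right_mem_Icc.2 hab) hab
  simp only [ψ] at key
  have hsplit : exp (-(Λ * (b - a))) = exp (Λ * a) / exp (Λ * b) := by
    rw [← exp_sub]; ring_nf
  rw [hsplit, div_mul_eq_mul_div, div_le_iff₀ (exp_pos _)]
  nlinarith

theorem exp_mul_le_of_deriv_ge_neg_mul {φ φ' : ℝ → ℝ} {Λ T a b : ℝ} (hΛ : 0 ≤ Λ) (hab : a ≤ b)
    (hT : b - a ≤ T) (hφ : ∀ x ∈ Icc a b, HasDerivWithinAt φ (φ' x) (Icc a b) x)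
    (ha : 0 ≤ φ a) (hbound : ∀ x ∈ Icc a b, -(Λ * φ x) ≤ φ' x) :
    exp (-(Λ * T)) * φ a ≤ φ b :=
  calc exp (-(Λ * T)) * φ a ≤ exp (-(Λ * (b - a))) * (φ a + 0 * (b - a)) := by
        rw [zero_mul, add_zero]
        gcongr
    _ ≤ φ b := exp_mul_le_image_of_deriv_ge_sub_mul hΛ le_rfl hab hφ
        fun x hx => by simpa using hbound x hx

theorem exp_mul_le_of_deriv_ge_sub_mul {φ φ' : ℝ → ℝ} {Λ κ T a b : ℝ} (hΛ : 0 ≤ Λ)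
    (hκ : 0 ≤ κ) (hab : 1 ≤ b - a) (hT : b - a ≤ T)
    (hφ : ∀ x ∈ Icc a b, HasDerivWithinAt φ (φ' x) (Icc a b) x) (ha : 0 ≤ φ a)
    (hbound : ∀ x ∈ Icc a b, κ - Λ * φ x ≤ φ' x) :
    exp (-(Λ * T)) * κ ≤ φ b :=
  calc exp (-(Λ * T)) * κ ≤ exp (-(Λ * (b - a))) * (φ a + κ * (b - a)) := by
        gcongr
        nlinarith
    _ ≤ φ b := exp_mul_le_image_of_deriv_ge_sub_mul hΛ hκ (by linarith) hφ hbound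

theorem eventually_lt_of_hasDerivWithinAt_sub {y f : ℝ → ℝ} {L a : ℝ}
    (hy : ∀ t ∈ Ici (0 : ℝ), HasDerivWithinAt y (f t - y t) (Ici 0) t)
    (hf : Tendsto f atTop (𝓝 L)) (ha : a < L) : ∀ᶠ t in atTop, a < y t := by
  obtain ⟨m, ham, hmL⟩ := exists_between ha
  obtain ⟨t₀, ht₀⟩ := eventually_atTop.1 (hf.eventually_const_lt hmL)
  set t₁ := max t₀ 0
  have hdecay : Tendsto (fun t => exp (-(t - t₁)) * (y t₁ - m)) atTop (𝓝 0) := by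
    simpa [sub_eq_add_neg, add_comm] using (tendsto_exp_neg_atTop_nhds_zero.comp
      (tendsto_atTop_add_const_right _ (-t₁) tendsto_id)).mul_const (y t₁ - m)
  filter_upwards [hdecay.eventually_const_lt (by linarith : a - m < 0), eventually_ge_atTop t₁]
    with t hlt ht
  have hsub : Icc t₁ t ⊆ Ici 0 := fun τ hτ => le_trans (le_max_right _ _) hτ.1
  have := exp_mul_le_image_of_deriv_ge_sub_mul (φ := fun τ => y τ - m) zero_le_one le_rfl ht
    (fun τ hτ => ((hy τ (hsub hτ)).sub_const m).mono hsub)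
    (fun τ hτ => by linarith [ht₀ τ (le_trans (le_max_left _ _) hτ.1)])
  simp only [one_mul, zero_mul, add_zero] at this
  linarith

theorem tendsto_of_hasDerivWithinAt_sub {y f : ℝ → ℝ} {L : ℝ}
    (hy : ∀ t ∈ Ici (0 : ℝ), HasDerivWithinAt y (f t - y t) (Ici 0) t)
    (hf : Tendsto f atTop (𝓝 L)) : Tendsto y atTop (𝓝 L) := by
  refine tendsto_order.2 ⟨fun a ha => eventually_lt_of_hasDerivWithinAt_sub hy hf ha,
    fun a ha => ?_⟩
  have hneg := eventually_lt_of_hasDerivWithinAt_sub (y := -y) (f := -f)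
    (fun t ht => (hy t ht).neg.congr_deriv (by simp; ring)) hf.neg (neg_lt_neg ha)
  exact hneg.mono fun t ht => by simpa using ht

theorem exists_hasDerivWithinAt_Ici {f : ℝ → ℝ} {a : ℝ} (hf : ContinuousOn f (Ici a)) :
    ∃ F : ℝ → ℝ, ∀ t ∈ Ici a, HasDerivWithinAt F (f t) (Ici a) t := by
  have hg : Continuous fun t => f (max t a) :=
    hf.comp_continuous (continuous_id.max continuous_const) fun t => le_max_right t a
  refine ⟨fun t => ∫ x in a..t, f (max x a), fun t ht => ?_⟩
  simpa [max_eq_left (mem_Ici.1 ht)] using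
    (hg.integral_hasStrictDerivAt a t).hasDerivAt.hasDerivWithinAt (s := Ici a)

theorem exists_hasDerivWithinAt_add_of_sub_apply {ι : Type*} {h F : ℝ → ι → ℝ} {n : ι} (β : ℝ)
    (hh : ∀ i, ∀ t ∈ Ici (0 : ℝ), HasDerivWithinAt (h · i) (F t i - h t n) (Ici 0) t) :
    ∃ c : ℝ → ℝ, ∀ i, ∀ t ∈ Ici (0 : ℝ),
      HasDerivWithinAt (fun s => h s i + c s) (F t i - β) (Ici 0) t := by
  obtain ⟨c, hc⟩ := exists_hasDerivWithinAt_Ici (f := fun t => h t n - β)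
    fun t ht => (hh n t ht).continuousWithinAt.sub continuousWithinAt_const
  exact ⟨c, fun i t ht => ((hh i t ht).add (hc t ht)).congr_deriv (by ring)⟩

theorem eventually_le_iSup_add_mul {ι : Type*} [Finite ι] {f : ℝ → ι → ℝ} {f' : ι → ℝ}
    {x r : ℝ} (hf : ∀ i, HasDerivWithinAt (f · i) (f' i) (Ici x) x)
    (hmax : ∀ i, (∀ j, f x j ≤ f x i) → f' i ≤ 0) (hr : 0 < r) :
    ∀ᶠ z in 𝓝[>] x, ∀ i, f z i ≤ (⨆ j, f x j) + r * (z - x) := by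
  refine eventually_all.2 fun i => ?_
  have hle : ∀ j, f x j ≤ ⨆ j, f x j := le_ciSup (Finite.bddAbove_range _)
  rcases (hle i).lt_or_eq with hlt | heq
  · have hcont := ((hf i).continuousWithinAt.mono Ioi_subset_Ici_self).eventually_lt_const hlt
    filter_upwards [hcont, self_mem_nhdsWithin] with z hz hxz
    linarith [mul_pos hr (sub_pos.2 hxz)]
  · have hslope := (hf i).Ioi_of_Ici.limsup_slope_le' (lt_irrefl x)
      ((hmax i fun j => heq ▸ hle j).trans_lt hr)
    filter_upwards [hslope, self_mem_nhdsWithin] with z hz hxz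
    rw [slope_def_field, div_lt_iff₀ (sub_pos.2 hxz)] at hz
    linarith

theorem antitoneOn_ciSup_of_hasDerivWithinAt {ι : Type*} [Finite ι] [Nonempty ι]
    {f f' : ℝ → ι → ℝ} {a : ℝ}
    (hf : ∀ i, ∀ t ∈ Ici a, HasDerivWithinAt (f · i) (f' t i) (Ici a) t)
    (hmax : ∀ t ∈ Ici a, ∀ i, (∀ j, f t j ≤ f t i) → f' t i ≤ 0) :
    AntitoneOn (fun t => ⨆ i, f t i) (Ici a) := by
  have : Fintype ι := Fintype.ofFinite ι
  intro s hs t ht hst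
  have hcont : ContinuousOn (fun t => ⨆ i, f t i) (Icc s t) := by
    simp only [← Finset.sup'_univ_eq_ciSup]
    exact ContinuousOn.finset_sup'_apply _ fun i _ x hx =>
      ((hf i x (mem_Ici.2 (le_trans hs hx.1))).continuousWithinAt).mono
        fun y hy => le_trans hs hy.1
  refine image_le_of_liminf_slope_right_le_deriv_boundary (B' := fun _ => 0) hcont le_rfl
    continuousOn_const (fun x _ => hasDerivWithinAt_const _ _ _) (fun x hx r hr => ?_)
    (right_mem_Icc.2 hst)
  have hx : a ≤ x := le_trans hs hx.1
  have hev := eventually_le_iSup_add_mul (r := r / 2)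
    (fun i => (hf i x hx).mono (Ici_subset_Ici.2 hx)) (hmax x hx) (half_pos hr)
  refine (hev.and self_mem_nhdsWithin).frequently.mono fun z ⟨hz, hxz⟩ => ?_
  rw [slope_def_field, div_lt_iff₀ (sub_pos.2 hxz)]
  linarith [ciSup_le hz, mul_pos hr (sub_pos.2 hxz)]

theorem monotoneOn_ciInf_of_hasDerivWithinAt {ι : Type*} [Finite ι] [Nonempty ι]
    {f f' : ℝ → ι → ℝ} {a : ℝ}
    (hf : ∀ i, ∀ t ∈ Ici a, HasDerivWithinAt (f · i) (f' t i) (Ici a) t)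
    (hmin : ∀ t ∈ Ici a, ∀ i, (∀ j, f t i ≤ f t j) → 0 ≤ f' t i) :
    MonotoneOn (fun t => ⨅ i, f t i) (Ici a) := by
  have hneg : ∀ t, ⨅ i, f t i = -⨆ i, -f t i := fun t => by
    simpa using (Real.mul_iSup_of_nonpos (r := -1) (by norm_num) fun i => -f t i).symm
  have hanti := antitoneOn_ciSup_of_hasDerivWithinAt (f' := fun t i => -f' t i)
    (fun i t ht => (hf i t ht).neg)
    (fun t ht i hi => neg_nonpos.2 (hmin t ht i fun j => neg_le_neg_iff.1 (hi j)))
  intro s hs t ht hst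
  simp only [hneg]
  exact neg_le_neg (hanti hs ht hst)

theorem tendsto_zero_of_antitoneOn_of_le_mul {f : ℝ → ℝ} {T ρ : ℝ} (hT : 0 < T) (hρ₀ : 0 ≤ ρ)
    (hρ₁ : ρ < 1) (hf₀ : ∀ t, 0 ≤ f t) (hanti : AntitoneOn f (Ici 0))
    (hcontr : ∀ s ∈ Ici (0 : ℝ), f (s + T) ≤ ρ * f s) :
    Tendsto f atTop (𝓝 0) := by
  have hiter : ∀ n : ℕ, f (n * T) ≤ ρ ^ n * f 0 := by
    intro n
    induction n with
    | zero => simp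
    | succ n ih =>
      calc f ((n + 1 : ℕ) * T) = f (n * T + T) := by push_cast; ring_nf
        _ ≤ ρ * f (n * T) := hcontr _ (mem_Ici.2 (by positivity))
        _ ≤ ρ * (ρ ^ n * f 0) := mul_le_mul_of_nonneg_left ih hρ₀
        _ = ρ ^ (n + 1) * f 0 := by ring
  have hfloor : Tendsto (fun t => ρ ^ ⌊t / T⌋₊ * f 0) atTop (𝓝 0) := by
    simpa using ((tendsto_pow_atTop_nhds_zero_of_lt_one hρ₀ hρ₁).comp
      (tendsto_nat_floor_atTop.comp (tendsto_id.atTop_div_const hT))).mul_const (f 0)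
  refine tendsto_of_tendsto_of_tendsto_of_le_of_le' tendsto_const_nhds hfloor
    (Eventually.of_forall hf₀) ?_
  filter_upwards [eventually_ge_atTop 0] with t ht
  have hle : ⌊t / T⌋₊ * T ≤ t := (le_div_iff₀ hT).1 (Nat.floor_le (div_nonneg ht hT.le))
  exact (hanti (mem_Ici.2 (by positivity)) ht hle).trans (hiter _)

theorem eq_univ_of_irreducible {ι : Type*} [Finite ι] {R : ι → ι → Prop}
    (hirr : ∀ S : Set ι, S.Nonempty → S ≠ univ → ∃ i ∈ S, ∃ j ∉ S, R i j)
    {S : ℕ → Set ι} (h₀ : (S 0).Nonempty) (hmono : ∀ p, S p ⊆ S (p + 1))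
    (hstep : ∀ p i j, R i j → i ∉ S p → j ∈ S p → i ∈ S (p + 1)) :
    S (Nat.card ι - 1) = univ := by
  have hgrow : ∀ p, S p = univ ∨ p + 1 ≤ (S p).ncard := by
    intro p
    induction p with
    | zero => exact Or.inr ((Set.ncard_pos).2 h₀)
    | succ p ih =>
      by_cases hp : S p = univ
      · exact Or.inl (univ_subset_iff.1 (hp ▸ hmono p))
      obtain ⟨i, hi, j, hj, hij⟩ := hirr (S p)ᶜ (nonempty_compl.2 hp)
        (compl_ne_univ.2 (h₀.mono (monotone_nat_of_le_succ hmono (Nat.zero_le p))))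
      have hins : insert i (S p) ⊆ S (p + 1) :=
        insert_subset (hstep p i j hij hi (not_not.1 hj)) (hmono p)
      have := Set.ncard_le_ncard hins
      rw [Set.ncard_insert_of_notMem hi] at this
      exact Or.inr (by have := ih.resolve_left hp; omega)
  rcases hgrow (Nat.card ι - 1) with h | h
  · exact h
  · refine Set.eq_of_subset_of_ncard_le (subset_univ _) ?_
    have : 0 < Nat.card ι := Nat.card_pos_iff.2 ⟨⟨h₀.some⟩, inferInstance⟩
    rw [Set.ncard_univ]
    omega

/-- A lower bound crosses one edge of `R` per unit of time, losing at most the factor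
`min 1 (exp (-(Λ * T)) * κ)`, and decays by at most `exp (-(Λ * T))` within a window of
length `T`. -/
noncomputable def spreadConst (Λ κ T : ℝ) (n : ℕ) : ℝ :=
  min 1 (exp (-(Λ * T)) * κ) ^ n * exp (-(Λ * T))

theorem spreadConst_pos {Λ κ T : ℝ} (hκ : 0 < κ) (n : ℕ) : 0 < spreadConst Λ κ T n :=
  mul_pos (pow_pos (lt_min one_pos (by positivity)) n) (exp_pos _)

theorem spreadConst_le_one {Λ κ T : ℝ} (hΛ : 0 ≤ Λ) (hT : 0 ≤ T) (hκ : 0 ≤ κ) (n : ℕ) :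
    spreadConst Λ κ T n ≤ 1 :=
  mul_le_one₀ (pow_le_one₀ (le_min zero_le_one (by positivity)) (min_le_left _ _))
    (exp_pos _).le (exp_le_one_iff.2 (by simpa using mul_nonneg hΛ hT))

theorem spreadConst_mul_le_of_irreducible {ι : Type*} [Finite ι] {R : ι → ι → Prop}
    (hirr : ∀ S : Set ι, S.Nonempty → S ≠ univ → ∃ i ∈ S, ∃ j ∉ S, R i j)
    {φ φ' : ℝ → ι → ℝ} {Λ κ s T : ℝ} (hΛ : 0 ≤ Λ) (hκ : 0 ≤ κ)
    (hT : ((Nat.card ι - 1 : ℕ) : ℝ) ≤ T)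
    (hφ : ∀ j, ∀ t ∈ Icc s (s + T), HasDerivWithinAt (φ · j) (φ' t j) (Icc s (s + T)) t)
    (hnonneg : ∀ t ∈ Icc s (s + T), ∀ j, 0 ≤ φ t j)
    (hdecay : ∀ t ∈ Icc s (s + T), ∀ j, -(Λ * φ t j) ≤ φ' t j)
    (hpush : ∀ t ∈ Icc s (s + T), ∀ i j, i ≠ j → R i j → κ * φ t j - Λ * φ t i ≤ φ' t i)
    (k j : ι) : spreadConst Λ κ T (Nat.card ι - 1) * φ s k ≤ φ (s + T) j := by
  have hT₀ : 0 ≤ T := le_trans (Nat.cast_nonneg _) hT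
  have hderiv : ∀ {a b}, s ≤ a → b ≤ s + T → ∀ j, ∀ t ∈ Icc a b,
      HasDerivWithinAt (φ · j) (φ' t j) (Icc a b) t :=
    fun ha hb j t ht => (hφ j t (Icc_subset_Icc ha hb ht)).mono (Icc_subset_Icc ha hb)
  set ε := min 1 (exp (-(Λ * T)) * κ)
  set c₀ := exp (-(Λ * T)) * φ s k
  have hε₀ : 0 ≤ ε := le_min zero_le_one (by positivity)
  have hε₁ : ε ≤ 1 := min_le_left _ _
  have hc₀ : 0 ≤ c₀ := mul_nonneg (exp_pos _).le (hnonneg s (left_mem_Icc.2 (by linarith)) k)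
  -- by irreducibility `S p` gains a coordinate at each step until it is everything
  set S : ℕ → Set ι := fun p => {j | ∀ t ∈ Icc (s + p) (s + T), ε ^ p * c₀ ≤ φ t j}
  have h₀ : k ∈ S 0 := by
    intro t ht
    simp only [CharP.cast_eq_zero, add_zero, pow_zero, one_mul] at ht ⊢
    exact exp_mul_le_of_deriv_ge_neg_mul hΛ ht.1 (by linarith [ht.2]) (hderiv le_rfl ht.2 k)
      (hnonneg s (left_mem_Icc.2 (by linarith)) k)
      fun τ hτ => hdecay τ (Icc_subset_Icc le_rfl ht.2 hτ) k
  have hmono : ∀ p, S p ⊆ S (p + 1) := by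
    intro p j hj t ht
    have hle : ε ^ (p + 1) * c₀ ≤ ε ^ p * c₀ := by
      rw [pow_succ]
      exact mul_le_mul_of_nonneg_right (mul_le_of_le_one_right (pow_nonneg hε₀ p) hε₁) hc₀
    exact hle.trans (hj t ⟨by push_cast at ht; linarith [ht.1], ht.2⟩)
  have hstep : ∀ p i j, R i j → i ∉ S p → j ∈ S p → i ∈ S (p + 1) := by
    intro p i j hij hi hj t ht
    push_cast at ht
    have hp : (0 : ℝ) ≤ p := Nat.cast_nonneg p
    have hij' : i ≠ j := fun h => hi (h ▸ hj)
    have hX : 0 ≤ ε ^ p * c₀ := mul_nonneg (pow_nonneg hε₀ p) hc₀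
    have hedge := exp_mul_le_of_deriv_ge_sub_mul (T := T) (a := s + p) (b := t)
      (κ := κ * (ε ^ p * c₀)) hΛ (mul_nonneg hκ hX) (by linarith [ht.1]) (by linarith [ht.2])
      (hderiv (by linarith) ht.2 i) (hnonneg _ ⟨by linarith, by linarith [ht.1, ht.2]⟩ i)
      fun τ hτ => by
        have hjτ : ε ^ p * c₀ ≤ φ τ j := hj τ ⟨hτ.1, hτ.2.trans ht.2⟩
        linarith [hpush τ (Icc_subset_Icc (by linarith) ht.2 hτ) i j hij' hij,
          mul_le_mul_of_nonneg_left hjτ hκ]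
    calc ε ^ (p + 1) * c₀ = ε * (ε ^ p * c₀) := by ring
      _ ≤ exp (-(Λ * T)) * κ * (ε ^ p * c₀) := mul_le_mul_of_nonneg_right (min_le_right _ _) hX
      _ ≤ φ t i := by rw [mul_assoc]; exact hedge
  have huniv := eq_univ_of_irreducible hirr ⟨k, h₀⟩ hmono hstep
  have hj : j ∈ S (Nat.card ι - 1) := huniv ▸ mem_univ j
  have := hj (s + T) ⟨by linarith, le_rfl⟩
  simp only [spreadConst]
  linarith

section GeneratorRow

variable {ι : Type*} [Fintype ι] {A : ι → ℝ} {i : ι}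

theorem sum_mul_sub_const (hrow : ∑ j, A j = 0) (w : ι → ℝ) (c : ℝ) :
    ∑ j, A j * (w j - c) = ∑ j, A j * w j := by
  simp only [mul_sub, Finset.sum_sub_distrib, ← Finset.sum_mul, hrow, zero_mul, sub_zero]

theorem sum_mul_sub_le_sum_mul (hoff : ∀ j, j ≠ i → 0 ≤ A j) (hrow : ∑ j, A j = 0)
    {s : Finset ι} (hi : i ∈ s) {w : ι → ℝ} {m : ℝ} (hm : ∀ j, m ≤ w j) :
    ∑ j ∈ s, A j * (w j - m) ≤ ∑ j, A j * w j := by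
  rw [← sum_mul_sub_const hrow w m]
  exact Finset.sum_le_sum_of_subset_of_nonneg (Finset.subset_univ s) fun j _ hj =>
    mul_nonneg (hoff j (by rintro rfl; exact hj hi)) (sub_nonneg.2 (hm j))

theorem sum_mul_nonpos_of_forall_le (hoff : ∀ j, j ≠ i → 0 ≤ A j) (hrow : ∑ j, A j = 0)
    {w : ι → ℝ} (hmax : ∀ j, w j ≤ w i) : ∑ j, A j * w j ≤ 0 := by
  rw [← sum_mul_sub_const hrow w (w i)]
  refine Finset.sum_nonpos fun j _ => ?_
  rcases eq_or_ne j i with rfl | hj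
  · simp
  · exact mul_nonpos_of_nonneg_of_nonpos (hoff j hj) (sub_nonpos.2 (hmax j))

theorem sum_mul_nonneg_of_forall_ge (hoff : ∀ j, j ≠ i → 0 ≤ A j) (hrow : ∑ j, A j = 0)
    {w : ι → ℝ} (hmin : ∀ j, w i ≤ w j) : 0 ≤ ∑ j, A j * w j := by
  have := sum_mul_nonpos_of_forall_le hoff hrow (w := -w) fun j => neg_le_neg (hmin j)
  simpa [Finset.sum_neg_distrib] using this

theorem neg_mul_sub_le_sum_mul (hoff : ∀ j, j ≠ i → 0 ≤ A j) (hrow : ∑ j, A j = 0)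
    {Λ m : ℝ} (hdiag : -Λ ≤ A i) {w : ι → ℝ} (hm : ∀ j, m ≤ w j) :
    -(Λ * (w i - m)) ≤ ∑ j, A j * w j := by
  have := sum_mul_sub_le_sum_mul hoff hrow (Finset.mem_singleton_self i) hm
  rw [Finset.sum_singleton] at this
  nlinarith [hm i]

theorem mul_sub_sub_mul_sub_le_sum_mul (hoff : ∀ j, j ≠ i → 0 ≤ A j) (hrow : ∑ j, A j = 0)
    {Λ κ m : ℝ} {j : ι} (hij : i ≠ j) (hdiag : -Λ ≤ A i) (hκ : κ ≤ A j) {w : ι → ℝ}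
    (hm : ∀ l, m ≤ w l) : κ * (w j - m) - Λ * (w i - m) ≤ ∑ l, A l * w l := by
  classical
  have := sum_mul_sub_le_sum_mul hoff hrow (Finset.mem_insert_self i {j}) hm
  rw [Finset.sum_pair hij] at this
  nlinarith [hm i, hm j]

theorem sum_mul_le_mul_sub (hoff : ∀ j, j ≠ i → 0 ≤ A j) (hrow : ∑ j, A j = 0)
    {Λ a b : ℝ} (hΛ : 0 ≤ Λ) (hdiag : -Λ ≤ A i) {w : ι → ℝ} (ha : ∀ j, w j ≤ a)
    (hb : b ≤ w i) : ∑ j, A j * w j ≤ Λ * (a - b) := by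
  have := neg_mul_sub_le_sum_mul hoff hrow hdiag (w := -w) (m := -a) fun j => neg_le_neg (ha j)
  simp only [Pi.neg_apply, mul_neg, Finset.sum_neg_distrib] at this
  nlinarith

theorem neg_mul_sub_le_sum_mul_of_le (hoff : ∀ j, j ≠ i → 0 ≤ A j) (hrow : ∑ j, A j = 0)
    {Λ a b : ℝ} (hΛ : 0 ≤ Λ) (hdiag : -Λ ≤ A i) {w : ι → ℝ} (hb : ∀ j, b ≤ w j)
    (ha : w i ≤ a) : -(Λ * (a - b)) ≤ ∑ j, A j * w j := by
  have := neg_mul_sub_le_sum_mul hoff hrow hdiag hb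
  nlinarith

end GeneratorRow

noncomputable def spanSeminorm {ι : Type*} (v : ι → ℝ) : ℝ := (⨆ i, v i) - ⨅ i, v i

theorem sub_le_spanSeminorm {ι : Type*} [Finite ι] (v : ι → ℝ) (i j : ι) :
    v i - v j ≤ spanSeminorm v :=
  sub_le_sub (le_ciSup (Finite.bddAbove_range v) i) (ciInf_le (Finite.bddBelow_range v) j)

theorem abs_sub_le_spanSeminorm {ι : Type*} [Finite ι] (v : ι → ℝ) (i j : ι) :
    |v i - v j| ≤ spanSeminorm v :=
  abs_sub_le_iff.2 ⟨sub_le_spanSeminorm v i j, sub_le_spanSeminorm v j i⟩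

theorem spanSeminorm_nonneg {ι : Type*} [Finite ι] [Nonempty ι] (v : ι → ℝ) :
    0 ≤ spanSeminorm v :=
  (sub_self _).symm.le.trans (sub_le_spanSeminorm v (Classical.arbitrary ι) _)

theorem abs_le_mul_spanSeminorm {ι U : Type*} [Fintype ι] {q : ι → ι → U → ℝ}
    (hoff : ∀ i j, i ≠ j → ∀ u, 0 ≤ q i j u)
    (hrow : ∀ i u, ∑ j, q i j u = 0) {Λ : ℝ} (hΛ : 0 ≤ Λ) (hdiag : ∀ i u, -Λ ≤ q i i u)
    {v v' : ι → ℝ} (hlow : ∀ i, ∃ u, ∑ j, q i j u * v j ≤ v' i)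
    (hup : ∀ i, ∃ u, v' i ≤ ∑ j, q i j u * v j) (i : ι) :
    |v' i| ≤ Λ * spanSeminorm v := by
  obtain ⟨u, hu⟩ := hlow i
  obtain ⟨u', hu'⟩ := hup i
  refine abs_le.2 ⟨?_, ?_⟩
  · exact (neg_mul_sub_le_sum_mul_of_le (fun j hj => hoff i j hj.symm u) (hrow i u) hΛ
      (hdiag i u) (ciInf_le (Finite.bddBelow_range v))
      (le_ciSup (Finite.bddAbove_range v) i)).trans hu
  · exact hu'.trans (sum_mul_le_mul_sub (fun j hj => hoff i j hj.symm u') (hrow i u') hΛ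
      (hdiag i u') (le_ciSup (Finite.bddAbove_range v)) (ciInf_le (Finite.bddBelow_range v) i))

section HJBOperator

variable {ι U : Type*} [Fintype ι]

noncomputable def hjbOperator (q : ι → ι → U → ℝ) (r : ι → U → ℝ) (v : ι → ℝ) (i : ι) : ℝ :=
  sInf (range fun u => r i u + ∑ j, q i j u * v j)

variable {q : ι → ι → U → ℝ} {r : ι → U → ℝ}

theorem hjbOperator_add_const (hrow : ∀ i u, ∑ j, q i j u = 0) (v : ι → ℝ) (c : ℝ) :
    hjbOperator q r (fun j => v j + c) = hjbOperator q r v := by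
  funext i
  simp only [hjbOperator]
  congr 2
  funext u
  rw [← sum_mul_sub_const (hrow i u) _ c]
  simp

variable [TopologicalSpace U] [CompactSpace U]

theorem isCompact_range_add_sum_mul (hq : ∀ i j, Continuous (q i j))
    (hr : ∀ i, Continuous (r i)) (v : ι → ℝ) (i : ι) :
    IsCompact (range fun u => r i u + ∑ j, q i j u * v j) :=
  isCompact_range ((hr i).add (continuous_finsetSum _ fun j _ => (hq i j).mul continuous_const))

theorem hjbOperator_le (hq : ∀ i j, Continuous (q i j)) (hr : ∀ i, Continuous (r i))
    (v : ι → ℝ) (i : ι) (u : U) : hjbOperator q r v i ≤ r i u + ∑ j, q i j u * v j :=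
  csInf_le (isCompact_range_add_sum_mul hq hr v i).bddBelow ⟨u, rfl⟩

theorem exists_hjbOperator_eq [Nonempty U] (hq : ∀ i j, Continuous (q i j))
    (hr : ∀ i, Continuous (r i)) (v : ι → ℝ) (i : ι) :
    ∃ u, hjbOperator q r v i = r i u + ∑ j, q i j u * v j := by
  obtain ⟨u, hu⟩ := (isCompact_range_add_sum_mul hq hr v i).sInf_mem (range_nonempty _)
  exact ⟨u, hu.symm⟩

theorem exists_sum_mul_le_hjbOperator_add_sub [Nonempty U] (hq : ∀ i j, Continuous (q i j))
    (hr : ∀ i, Continuous (r i)) (v w : ι → ℝ) (i : ι) :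
    ∃ u, ∑ j, q i j u * w j ≤ hjbOperator q r (v + w) i - hjbOperator q r v i := by
  obtain ⟨u, hu⟩ := exists_hjbOperator_eq hq hr (v + w) i
  refine ⟨u, ?_⟩
  have := hjbOperator_le hq hr v i u
  simp only [hu, Pi.add_apply, mul_add, Finset.sum_add_distrib]
  linarith

theorem exists_hjbOperator_add_sub_le_sum_mul [Nonempty U] (hq : ∀ i j, Continuous (q i j))
    (hr : ∀ i, Continuous (r i)) (v w : ι → ℝ) (i : ι) :
    ∃ u, hjbOperator q r (v + w) i - hjbOperator q r v i ≤ ∑ j, q i j u * w j := by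
  obtain ⟨u, hu⟩ := exists_hjbOperator_eq hq hr v i
  refine ⟨u, ?_⟩
  have := hjbOperator_le hq hr (v + w) i u
  simp only [Pi.add_apply, mul_add, Finset.sum_add_distrib] at this
  linarith

end HJBOperator

theorem exists_nonneg_forall_neg_le {ι U : Type*} [Finite ι] [TopologicalSpace U]
    [CompactSpace U] {f : ι → U → ℝ} (hf : ∀ i, Continuous (f i)) :
    ∃ Λ, 0 ≤ Λ ∧ ∀ i u, -Λ ≤ f i u := by
  choose m hm using fun i => (isCompact_range (hf i)).bddBelow
  obtain ⟨M, hM⟩ := Finite.bddBelow_range m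
  exact ⟨|M|, abs_nonneg M, fun i u => (neg_abs_le M).trans ((hM ⟨i, rfl⟩).trans (hm i ⟨u, rfl⟩))⟩

theorem exists_pos_forall_pos_imp_le {ι : Type*} [Finite ι] (f : ι → ℝ) :
    ∃ γ > 0, ∀ i, 0 < f i → γ ≤ f i := by
  have : ∀ᶠ γ in 𝓝[>] (0 : ℝ), ∀ i, 0 < f i → γ ≤ f i := eventually_all.2 fun i => by
    by_cases hi : 0 < f i
    · filter_upwards [Ioo_mem_nhdsGT hi] with γ hγ using fun _ => hγ.2.le
    · exact Eventually.of_forall fun _ h => absurd h hi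
  obtain ⟨γ, hγ, hγ₀⟩ := (this.and self_mem_nhdsWithin).exists
  exact ⟨γ, hγ₀, hγ⟩

section SandwichedFlow

variable {ι U : Type*} [Fintype ι] [Nonempty ι] {q : ι → ι → U → ℝ} {w w' : ℝ → ι → ℝ}

theorem antitoneOn_ciSup_of_le_sum_mul (hoff : ∀ i j, i ≠ j → ∀ u, 0 ≤ q i j u)
    (hrow : ∀ i u, ∑ j, q i j u = 0)
    (hw : ∀ i, ∀ t ∈ Ici (0 : ℝ), HasDerivWithinAt (w · i) (w' t i) (Ici 0) t)
    (hup : ∀ t ∈ Ici (0 : ℝ), ∀ i, ∃ u, w' t i ≤ ∑ j, q i j u * w t j) :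
    AntitoneOn (fun t => ⨆ i, w t i) (Ici 0) :=
  antitoneOn_ciSup_of_hasDerivWithinAt hw fun t ht i hmax => by
    obtain ⟨u, hu⟩ := hup t ht i
    exact hu.trans (sum_mul_nonpos_of_forall_le (fun j hj => hoff i j hj.symm u) (hrow i u) hmax)

theorem monotoneOn_ciInf_of_sum_mul_le (hoff : ∀ i j, i ≠ j → ∀ u, 0 ≤ q i j u)
    (hrow : ∀ i u, ∑ j, q i j u = 0)
    (hw : ∀ i, ∀ t ∈ Ici (0 : ℝ), HasDerivWithinAt (w · i) (w' t i) (Ici 0) t)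
    (hlow : ∀ t ∈ Ici (0 : ℝ), ∀ i, ∃ u, ∑ j, q i j u * w t j ≤ w' t i) :
    MonotoneOn (fun t => ⨅ i, w t i) (Ici 0) :=
  monotoneOn_ciInf_of_hasDerivWithinAt hw fun t ht i hmin => by
    obtain ⟨u, hu⟩ := hlow t ht i
    exact (sum_mul_nonneg_of_forall_ge (fun j hj => hoff i j hj.symm u) (hrow i u) hmin).trans hu

theorem spanSeminorm_add_le (hoff : ∀ i j, i ≠ j → ∀ u, 0 ≤ q i j u)
    (hrow : ∀ i u, ∑ j, q i j u = 0) {Λ κ T : ℝ} (hΛ : 0 ≤ Λ) (hκ : 0 ≤ κ)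
    (hdiag : ∀ i u, -Λ ≤ q i i u) {R : ι → ι → Prop}
    (hR : ∀ i j, i ≠ j → R i j → ∀ u, κ ≤ q i j u)
    (hirr : ∀ S : Set ι, S.Nonempty → S ≠ univ → ∃ i ∈ S, ∃ j ∉ S, R i j)
    (hT : ((Nat.card ι - 1 : ℕ) : ℝ) ≤ T)
    (hw : ∀ i, ∀ t ∈ Ici (0 : ℝ), HasDerivWithinAt (w · i) (w' t i) (Ici 0) t)
    (hlow : ∀ t ∈ Ici (0 : ℝ), ∀ i, ∃ u, ∑ j, q i j u * w t j ≤ w' t i)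
    (hup : ∀ t ∈ Ici (0 : ℝ), ∀ i, ∃ u, w' t i ≤ ∑ j, q i j u * w t j) {s : ℝ} (hs : 0 ≤ s) :
    spanSeminorm (w (s + T)) ≤ (1 - spreadConst Λ κ T (Nat.card ι - 1)) * spanSeminorm (w s) := by
  have hT₀ : 0 ≤ T := le_trans (Nat.cast_nonneg _) hT
  have hIcc : Icc s (s + T) ⊆ Ici 0 := fun t ht => hs.trans ht.1
  set b : ℝ → ℝ := fun t => ⨅ i, w t i
  have hb_mono := monotoneOn_ciInf_of_sum_mul_le hoff hrow hw hlow
  have hb_le : ∀ t ∈ Icc s (s + T), ∀ j, b s ≤ w t j := fun t ht j =>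
    (hb_mono hs (hIcc ht) ht.1).trans (ciInf_le (Finite.bddBelow_range _) j)
  obtain ⟨k, hk⟩ := exists_eq_ciSup_of_finite (f := w s)
  have hspread := spreadConst_mul_le_of_irreducible hirr (φ := fun t j => w t j - b s)
    (φ' := w') hΛ hκ hT (fun j t ht => ((hw j t (hIcc ht)).sub_const (b s)).mono hIcc)
    (fun t ht j => sub_nonneg.2 (hb_le t ht j))
    (fun t ht j => by
      obtain ⟨u, hu⟩ := hlow t (hIcc ht) j
      exact (neg_mul_sub_le_sum_mul (fun l hl => hoff j l hl.symm u) (hrow j u) (hdiag j u)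
        (hb_le t ht)).trans hu)
    (fun t ht i j hij hRij => by
      obtain ⟨u, hu⟩ := hlow t (hIcc ht) i
      exact (mul_sub_sub_mul_sub_le_sum_mul (fun l hl => hoff i l hl.symm u) (hrow i u) hij
        (hdiag i u) (hR i j hij hRij u) (hb_le t ht)).trans hu) k
  have hb_step : b s + spreadConst Λ κ T (Nat.card ι - 1) * spanSeminorm (w s) ≤ b (s + T) :=
    le_ciInf fun j => by
      have := hspread j
      simp only [spanSeminorm, ← hk]
      linarith
  have ha_step : (⨆ i, w (s + T) i) ≤ ⨆ i, w s i :=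
    antitoneOn_ciSup_of_le_sum_mul hoff hrow hw hup hs (hIcc (right_mem_Icc.2 (by linarith)))
      (by linarith)
  simp only [spanSeminorm] at hb_step ⊢
  linarith

theorem tendsto_spanSeminorm_atTop (hoff : ∀ i j, i ≠ j → ∀ u, 0 ≤ q i j u)
    (hrow : ∀ i u, ∑ j, q i j u = 0) {Λ κ : ℝ} (hΛ : 0 ≤ Λ) (hκ : 0 < κ)
    (hdiag : ∀ i u, -Λ ≤ q i i u) {R : ι → ι → Prop}
    (hR : ∀ i j, i ≠ j → R i j → ∀ u, κ ≤ q i j u)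
    (hirr : ∀ S : Set ι, S.Nonempty → S ≠ univ → ∃ i ∈ S, ∃ j ∉ S, R i j)
    (hw : ∀ i, ∀ t ∈ Ici (0 : ℝ), HasDerivWithinAt (w · i) (w' t i) (Ici 0) t)
    (hlow : ∀ t ∈ Ici (0 : ℝ), ∀ i, ∃ u, ∑ j, q i j u * w t j ≤ w' t i)
    (hup : ∀ t ∈ Ici (0 : ℝ), ∀ i, ∃ u, w' t i ≤ ∑ j, q i j u * w t j) :
    Tendsto (fun t => spanSeminorm (w t)) atTop (𝓝 0) := by
  have hT : (0 : ℝ) < Nat.card ι := Nat.cast_pos.2 Nat.card_pos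
  have hc := spreadConst_pos (Λ := Λ) (T := Nat.card ι) hκ (Nat.card ι - 1)
  have hc₁ := spreadConst_le_one (κ := κ) (n := Nat.card ι - 1) hΛ hT.le hκ.le
  refine tendsto_zero_of_antitoneOn_of_le_mul hT (by linarith) (by linarith)
    (fun t => spanSeminorm_nonneg (w t)) (fun s hs t ht hst => ?_)
    (fun s hs => spanSeminorm_add_le hoff hrow hΛ hκ.le hdiag hR hirr
      (by exact_mod_cast Nat.sub_le _ 1) hw hlow hup hs)
  have := antitoneOn_ciSup_of_le_sum_mul hoff hrow hw hup hs ht hst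
  have := monotoneOn_ciInf_of_sum_mul_le hoff hrow hw hlow hs ht hst
  simp only [spanSeminorm]
  linarith

end SandwichedFlow

/-- Convergence of the relative value iteration for the continuous-time controlled
Markov chain: under uniform irreducibility, if `(V*, β)` satisfies `G(V*) = β·𝟏` and
`V*_N = 0`, then every solution of `ḣ(t) = G(h(t)) − h_N(t)·𝟏` converges, as
`t → ∞`, to `V* + β·𝟏`. -/
theorem stmt_14 (N : ℕ) (hN : 1 ≤ N) (𝕌 : Type*) [TopologicalSpace 𝕌]
    [CompactSpace 𝕌] [Nonempty 𝕌]
    (q : Fin N → Fin N → 𝕌 → ℝ) (hqc : ∀ i j, Continuous (q i j))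
    (hqoff : ∀ i j, i ≠ j → ∀ u, 0 ≤ q i j u)
    (hqrow : ∀ i u, ∑ j, q i j u = 0)
    (r : Fin N → 𝕌 → ℝ) (hrc : ∀ i, Continuous (r i))
    (G : (Fin N → ℝ) → Fin N → ℝ)
    (hG : ∀ v i, G v i = sInf (Set.range fun u => r i u + ∑ j, q i j u * v j))
    (δ : ℝ) (hδ : 0 < δ) (qbar : Fin N → Fin N → ℝ)
    (hminor : ∀ i j, i ≠ j → ∀ u, δ * qbar i j ≤ q i j u)
    (hirr : ∀ S : Set (Fin N), S.Nonempty → S ≠ Set.univ →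
      ∃ i ∈ S, ∃ j ∉ S, 0 < qbar i j)
    (Vstar : Fin N → ℝ) (β : ℝ) (hHJB : ∀ i, G Vstar i = β)
    (hnorm : Vstar ⟨N - 1, by omega⟩ = 0)
    (h : ℝ → Fin N → ℝ)
    (hode : ∀ t ∈ Set.Ici (0 : ℝ),
      HasDerivWithinAt h (fun i => G (h t) i - h t ⟨N - 1, by omega⟩)
        (Set.Ici (0 : ℝ)) t) :
    Tendsto (fun t => h t) atTop (nhds (fun i => Vstar i + β)) := by
  set n : Fin N := ⟨N - 1, by omega⟩
  have : Nonempty (Fin N) := ⟨n⟩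
  obtain rfl : G = hjbOperator q r := funext fun v => funext (hG v)
  obtain ⟨Λ, hΛ, hdiag⟩ := exists_nonneg_forall_neg_le fun i => hqc i i
  obtain ⟨γ, hγ, hγle⟩ := exists_pos_forall_pos_imp_le fun p : Fin N × Fin N => qbar p.1 p.2
  have hh : ∀ i, ∀ t ∈ Ici (0 : ℝ), HasDerivWithinAt (h · i) (hjbOperator q r (h t) i - h t n)
      (Ici 0) t := fun i t ht => hasDerivWithinAt_pi.1 (hode t ht) i
  obtain ⟨c, hc⟩ := exists_hasDerivWithinAt_add_of_sub_apply β hh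
  set w : ℝ → Fin N → ℝ := fun t i => h t i + c t - Vstar i
  have hw : ∀ i, ∀ t ∈ Ici (0 : ℝ), HasDerivWithinAt (w · i) (hjbOperator q r (h t) i - β)
      (Ici 0) t := fun i t ht => (hc i t ht).sub_const (Vstar i)
  have hGw : ∀ t i, hjbOperator q r (Vstar + w t) i - hjbOperator q r Vstar i =
      hjbOperator q r (h t) i - β := fun t i => by
    have : Vstar + w t = fun j => h t j + c t := funext fun j => by simp [w]
    rw [this, hjbOperator_add_const hqrow, hHJB]
  have hlow := fun t (_ : t ∈ Ici (0 : ℝ)) i => hGw t i ▸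
    exists_sum_mul_le_hjbOperator_add_sub hqc hrc Vstar (w t) i
  have hup := fun t (_ : t ∈ Ici (0 : ℝ)) i => hGw t i ▸
    exists_hjbOperator_add_sub_le_sum_mul hqc hrc Vstar (w t) i
  have hspan := tendsto_spanSeminorm_atTop hqoff hqrow hΛ (mul_pos hδ hγ) hdiag
    (fun i j hij hq u => (mul_le_mul_of_nonneg_left (hγle (i, j) hq) hδ.le).trans
      (hminor i j hij u)) hirr hw hlow hup
  have hGn : Tendsto (fun t => hjbOperator q r (h t) n - β) atTop (𝓝 0) :=
    squeeze_zero_norm' ((eventually_ge_atTop 0).mono fun t ht =>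
      abs_le_mul_spanSeminorm hqoff hqrow hΛ hdiag (hlow t ht) (hup t ht) n)
      (by simpa using hspan.const_mul Λ)
  have hhn := tendsto_of_hasDerivWithinAt_sub (hh n) (by simpa using hGn.add_const β)
  refine tendsto_pi_nhds.2 fun i => ?_
  convert ((squeeze_zero_norm (fun t => abs_sub_le_spanSeminorm (w t) i n) hspan).add
    hhn).add_const (Vstar i) using 2
  · simp only [w, hnorm]; ring
  · ring
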